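/- If F is non-redundant, then every simple r→t path P in G decomposes uniquely as P = P_R · (u_i v_i) · P_T for some i, where P_R is a (possibly trivial) simple r→u_i path entirely contained in R and P_T is a (possibly trivial) simple v_i→t path entirely contained in T. In particular, P uses exactly one edge of F, never re-enters R after leaving it, and never leaves T after entering it. -/

import Mathlib

/-- `S` is a strongly connected component of the digraph `E`. -/
def IsSCC {n : ℕ} (E : Fin n → Fin n → Prop) (S : Set (Fin n)) : Prop :=
  S.Nonempty ∧ (∀ u ∈ S, ∀ v ∈ S, Relation.ReflTransGen E u v) ∧
    ∀ u ∈ S, ∀ v, Relation.ReflTransGen E u v → Relation.ReflTransGen E v u → v ∈ S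

/-- A simple `u → v` path in `G`: an injective sequence of `ℓ+1` vertices starting at
`u`, ending at `v`, with consecutive pairs being edges of `G`. -/
abbrev SPath (n : ℕ) (E : Fin n → Fin n → Prop) (u v : Fin n) :=
  Σ ℓ : Fin n, {f : Fin ((ℓ : ℕ) + 1) → Fin n //
    Function.Injective f ∧ f 0 = u ∧ f (Fin.last (ℓ : ℕ)) = v ∧
      ∀ i : Fin (ℓ : ℕ), E (f i.castSucc) (f i.succ)}

/-!
Let `d` be the last position of `P` in `R` and `c` the first one in `T`. Since `R` and `T` are
strongly connected components, every vertex of `P` up to `d` lies in `R` and every vertex from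
`c` on lies in `T`; in particular `d < c`. If the segment of `P` from `d` to `c` used no edge
of `F`, then every edge `uᵢvᵢ` could be bypassed by `uᵢ ⇝ P d ⇝ P c ⇝ vᵢ` inside `G - F`,
and deleting `F` would not change reachability. So that segment uses an edge of `F`, which
must start at `d` and end at `c`.
-/

open Relation

section Chain

variable {α : Type*} {r : α → α → Prop} {L : ℕ} {f : Fin (L + 1) → α}

theorem reflTransGen_of_chain_of_le {a b : Fin (L + 1)} (hab : a ≤ b)
    (h : ∀ i : Fin L, a ≤ i.castSucc → i.succ ≤ b → r (f i.castSucc) (f i.succ)) :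
    ReflTransGen r (f a) (f b) := by
  refine ReflTransGen.lift f (fun x y hxy => hxy) _ _ (reflTransGen_of_succ_of_le _ ?_ hab)
  intro j ⟨haj, hjb⟩
  obtain ⟨i, rfl⟩ := Fin.eq_castSucc_of_ne_last (hjb.trans_le (Fin.le_last b)).ne
  rw [Fin.orderSucc_castSucc]
  exact h i haj (Fin.castSucc_lt_iff_succ_le.mp hjb)

theorem exists_edge_or_reflTransGen_of_chain (hf : ∀ i : Fin L, r (f i.castSucc) (f i.succ))
    (F : α → α → Prop) {a b : Fin (L + 1)} (hab : a ≤ b) :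
    (∃ i : Fin L, a ≤ i.castSucc ∧ i.succ ≤ b ∧ F (f i.castSucc) (f i.succ)) ∨
      ReflTransGen (fun x y => r x y ∧ ¬F x y) (f a) (f b) := by
  by_cases hF : ∃ i : Fin L, a ≤ i.castSucc ∧ i.succ ≤ b ∧ F (f i.castSucc) (f i.succ)
  · exact .inl hF
  · exact .inr (reflTransGen_of_chain_of_le hab fun i hai hib =>
      ⟨hf i, fun hFi => hF ⟨i, hai, hib, hFi⟩⟩)

end Chain

namespace IsSCC

variable {n : ℕ} {E : Fin n → Fin n → Prop} {S : Set (Fin n)}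

theorem mem_of_reflTransGen (hS : IsSCC E S) {x y w : Fin n} (hx : x ∈ S) (hy : y ∈ S)
    (hxw : ReflTransGen E x w) (hwy : ReflTransGen E w y) : w ∈ S :=
  hS.2.2 x hx w hxw (hwy.trans (hS.2.1 y hy x hx))

theorem disjoint {T : Set (Fin n)} (hS : IsSCC E S) (hT : IsSCC E T) (hST : S ≠ T) :
    Disjoint S T := by
  refine Set.disjoint_left.mpr fun x hxS hxT => hST (Set.ext fun y => ⟨fun hy => ?_, fun hy => ?_⟩)
  · exact hT.mem_of_reflTransGen hxT hxT (hS.2.1 x hxS y hy) (hS.2.1 y hy x hxS)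
  · exact hS.mem_of_reflTransGen hxS hxS (hT.2.1 x hxT y hy) (hT.2.1 y hy x hxT)

theorem reflTransGen_of_restrict (hS : IsSCC E S) {E' : Fin n → Fin n → Prop}
    (h : ∀ a ∈ S, ∀ b ∈ S, E a b → E' a b) {x y : Fin n} (hx : x ∈ S) (hy : y ∈ S) :
    ReflTransGen E' x y := by
  induction hS.2.1 x hx y hy using ReflTransGen.head_induction_on with
  | refl => exact .refl
  | head hac hcy ih =>
    have hc := hS.mem_of_reflTransGen hx hy (.single hac) hcy
    exact .head (h _ hx _ hc hac) (ih hc)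

theorem mem_of_chain (hS : IsSCC E S) {L : ℕ} {f : Fin (L + 1) → Fin n}
    (hf : ∀ i : Fin L, E (f i.castSucc) (f i.succ)) {a j b : Fin (L + 1)}
    (haj : a ≤ j) (hjb : j ≤ b) (ha : f a ∈ S) (hb : f b ∈ S) : f j ∈ S :=
  hS.mem_of_reflTransGen ha hb (reflTransGen_of_chain_of_le haj fun i _ _ => hf i)
    (reflTransGen_of_chain_of_le hjb fun i _ _ => hf i)

end IsSCC

section Crossing

variable {n : ℕ} {E F : Fin n → Fin n → Prop} {R T : Set (Fin n)}

theorem reflTransGen_iff_of_bypass (hR : IsSCC E R) (hT : IsSCC E T) (hRT : Disjoint R T)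
    (hF : ∀ a b, F a b → a ∈ R ∧ b ∈ T) {x y : Fin n} (hx : x ∈ R) (hy : y ∈ T)
    (hxy : ReflTransGen (fun a b => E a b ∧ ¬F a b) x y) (a b : Fin n) :
    ReflTransGen E a b ↔ ReflTransGen (fun a b => E a b ∧ ¬F a b) a b := by
  refine ⟨ReflTransGen.lift' id (fun a b hab => ?_) a b,
    ReflTransGen.mono (fun _ _ (h : _ ∧ _) => h.1) a b⟩
  by_cases hFab : F a b
  · obtain ⟨ha, hb⟩ := hF a b hFab
    have inR : ReflTransGen (fun a b => E a b ∧ ¬F a b) a x := hR.reflTransGen_of_restrict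
      (fun c _ d hd hcd => ⟨hcd, fun h => hRT.notMem_of_mem_left hd (hF c d h).2⟩) ha hx
    have inT : ReflTransGen (fun a b => E a b ∧ ¬F a b) y b := hT.reflTransGen_of_restrict
      (fun c hc d _ hcd => ⟨hcd, fun h => hRT.notMem_of_mem_left (hF c d h).1 hc⟩) hy hb
    exact inR.trans (hxy.trans inT)
  · exact .single ⟨hab, hFab⟩

theorem exists_crossing_edge_of_chain (hR : IsSCC E R) (hT : IsSCC E T) (hRT : Disjoint R T)
    (hF : ∀ a b, F a b → a ∈ R ∧ b ∈ T)
    (hsep : ∀ x ∈ R, ∀ y ∈ T, ¬ReflTransGen (fun a b => E a b ∧ ¬F a b) x y)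
    {L : ℕ} {f : Fin (L + 1) → Fin n} (hf : ∀ i : Fin L, E (f i.castSucc) (f i.succ))
    (h0 : f 0 ∈ R) (hlast : f (Fin.last L) ∈ T) :
    ∃ i : Fin L, F (f i.castSucc) (f i.succ) ∧
      (∀ j, f j ∈ R ↔ j ≤ i.castSucc) ∧ ∀ j, f j ∈ T ↔ i.succ ≤ j := by
  classical
  set d := (Finset.univ.filter (f · ∈ R)).max' ⟨0, by simpa using h0⟩
  set c := (Finset.univ.filter (f · ∈ T)).min' ⟨Fin.last L, by simpa using hlast⟩
  have hRd : ∀ j, f j ∈ R ↔ j ≤ d := fun j =>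
    ⟨fun hj => Finset.le_max' _ _ (by simpa using hj), fun hj => hR.mem_of_chain hf
      (Fin.zero_le j) hj h0 (by simpa using Finset.max'_mem (Finset.univ.filter (f · ∈ R)) _)⟩
  have hTc : ∀ j, f j ∈ T ↔ c ≤ j := fun j =>
    ⟨fun hj => Finset.min'_le _ _ (by simpa using hj), fun hj => hT.mem_of_chain hf
      hj (Fin.le_last j) (by simpa using Finset.min'_mem (Finset.univ.filter (f · ∈ T)) _) hlast⟩
  have hdc : d ≤ c := le_of_not_gt fun hcd =>
    hRT.notMem_of_mem_left ((hRd c).2 hcd.le) ((hTc c).2 le_rfl)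
  rcases exists_edge_or_reflTransGen_of_chain hf F hdc with ⟨i, hdi, hic, hFi⟩ | hbypass
  · have hid : i.castSucc = d := le_antisymm ((hRd _).1 (hF _ _ hFi).1) hdi
    have hic' : i.succ = c := le_antisymm hic ((hTc _).1 (hF _ _ hFi).2)
    exact ⟨i, hFi, hid ▸ hRd, hic' ▸ hTc⟩
  · exact absurd hbypass (hsep _ ((hRd d).2 le_rfl) _ ((hTc c).2 le_rfl))

end Crossing

theorem simple_path_decomposition_of_nonredundant_general (n k : ℕ)
    (E : Fin n → Fin n → Prop)
    (R T : Set (Fin n)) (hR : IsSCC E R) (hT : IsSCC E T) (hRT : R ≠ T)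
    (u v : Fin k → Fin n) (hu : ∀ i, u i ∈ R) (hv : ∀ i, v i ∈ T)
    (hinj : Function.Injective fun i => (u i, v i))
    (r t : Fin n) (hr : r ∈ R) (ht : t ∈ T)
    (hnonred : ¬ ∀ a b, Relation.ReflTransGen E a b ↔
        Relation.ReflTransGen (fun a b => E a b ∧ ¬∃ i, a = u i ∧ b = v i) a b) :
    ∀ P : SPath n E r t,
      ∃! p : Fin k × Fin ((P.1 : ℕ)),
        P.2.1 p.2.castSucc = u p.1 ∧ P.2.1 p.2.succ = v p.1 ∧
        (∀ j : Fin ((P.1 : ℕ) + 1), (j : ℕ) ≤ (p.2 : ℕ) → P.2.1 j ∈ R) ∧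
        (∀ j : Fin ((P.1 : ℕ) + 1), (p.2 : ℕ) + 1 ≤ (j : ℕ) → P.2.1 j ∈ T) := by
  rintro ⟨L, f, -, h0, hlast, hf⟩
  dsimp only
  have hdisj := hR.disjoint hT hRT
  have hF : ∀ a b, (∃ i, a = u i ∧ b = v i) → a ∈ R ∧ b ∈ T := by
    rintro _ _ ⟨i, rfl, rfl⟩
    exact ⟨hu i, hv i⟩
  obtain ⟨i, ⟨m, hum, hvm⟩, hRi, hTi⟩ := exists_crossing_edge_of_chain hR hT hdisj hF
    (fun x hx y hy hxy => hnonred (reflTransGen_iff_of_bypass hR hT hdisj hF hx hy hxy))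
    hf (h0 ▸ hr) (hlast ▸ ht)
  refine ⟨(m, i), ⟨hum, hvm, fun j hj => (hRi j).2 (Fin.le_iff_val_le_val.2 hj),
    fun j hj => (hTi j).2 (Fin.le_iff_val_le_val.2 hj)⟩, ?_⟩
  rintro ⟨m', i'⟩ ⟨hum', hvm', hR', hT'⟩
  have hi : i' = i := le_antisymm
    (Fin.castSucc_le_castSucc_iff.1 ((hRi _).1 (hR' _ le_rfl)))
    (Fin.succ_le_succ_iff.1 ((hTi _).1 (hT' _ le_rfl)))
  subst hi
  exact Prod.ext (hinj (Prod.ext (hum'.symm.trans hum) (hvm'.symm.trans hvm))) rfl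

/-- If `F` (the set of all edges from SCC `R` to SCC `T`, `R ≠ T`) is non-redundant,
then every simple `r → t` path `P` decomposes uniquely as `P_R · (u_i v_i) · P_T`:
there is a unique pair `(i, m)` of an edge index `i` and a position `m` on `P` such
that the `m`-th edge of `P` is `u_i v_i`, all vertices of `P` up to position `m` lie
in `R`, and all vertices after it lie in `T`. In particular `P` uses exactly one edge
of `F`, never re-enters `R` after leaving it, and never leaves `T` after entering it. -/
theorem simple_path_decomposition_of_nonredundant (n k : ℕ)
    (E : Fin n → Fin n → Prop)
    (R T : Set (Fin n)) (hR : IsSCC E R) (hT : IsSCC E T) (hRT : R ≠ T)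
    (u v : Fin k → Fin n) (hu : ∀ i, u i ∈ R) (hv : ∀ i, v i ∈ T)
    (hEdge : ∀ i, E (u i) (v i))
    (hinj : Function.Injective fun i => (u i, v i))
    (hall : ∀ a b, E a b → a ∈ R → b ∈ T → ∃ i, a = u i ∧ b = v i)
    (r t : Fin n) (hr : r ∈ R) (ht : t ∈ T)
    (hnonred : ¬ ∀ a b, Relation.ReflTransGen E a b ↔
        Relation.ReflTransGen (fun a b => E a b ∧ ¬∃ i, a = u i ∧ b = v i) a b) :
    ∀ P : SPath n E r t,
      ∃! p : Fin k × Fin ((P.1 : ℕ)),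
        P.2.1 p.2.castSucc = u p.1 ∧ P.2.1 p.2.succ = v p.1 ∧
        (∀ j : Fin ((P.1 : ℕ) + 1), (j : ℕ) ≤ (p.2 : ℕ) → P.2.1 j ∈ R) ∧
        (∀ j : Fin ((P.1 : ℕ) + 1), (p.2 : ℕ) + 1 ≤ (j : ℕ) → P.2.1 j ∈ T) :=
  simple_path_decomposition_of_nonredundant_general n k E R T hR hT hRT u v hu hv hinj r t hr ht
    hnonred
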